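/- Let m ≥ 1 and φ ∈ C^∞(ℝ²) be m-admissible. There exist constants C₂ > 1 and ε₀, ε₂ ∈ (0,1) such that for every z ≠ 0 there is a unit vector u ∈ S¹ ⊂ ℝ² with the property: for all r ∈ (0, ε₀|z|) and all ζ ∈ B_Eucl(z + (r/2)u, ε₂ r), one has |M(z,ζ)(ζ − z)| ≥ C₂^{-1} |z|^{2m} r, where M(z,ζ) is the 2×2 matrix with rows ( φ_{xx}(z') − 2m|z|^{2m−2}xy , φ_{xy}(z') − |z|^{2m−2}(|z|² + 2m y²) ) and ( φ_{xy}(z'') + |z|^{2m−2}(|z|² + 2m x²) , φ_{yy}(z'') + 2m|z|^{2m−2}xy ) for suitable points z', z'' on the segment [z, ζ]. -/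

import Mathlib

open MeasureTheory Set

noncomputable section

/-- Euclidean norm on ℝ². -/
def nrm (z : ℝ × ℝ) : ℝ := Real.sqrt (z.1 ^ 2 + z.2 ^ 2)

/-- `|z|^(2m)` for a real parameter `m`. -/
def w2m (m : ℝ) (z : ℝ × ℝ) : ℝ := (z.1 ^ 2 + z.2 ^ 2) ^ m
/-- `φ` is `m`-admissible with constant `C`:
`|D³φ(z)| ≤ C|z|^(2m−1)`, `|D²φ(z)| ≤ C|z|^(2m)`, `|Dφ(z)| ≤ C|z|^(2m+1)`. -/
def Admissible (m C : ℝ) (φ : ℝ × ℝ → ℝ) : Prop :=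
  ContDiff ℝ (⊤ : ℕ∞) φ ∧
  (∀ z, ‖iteratedFDeriv ℝ 1 φ z‖ ≤ C * nrm z ^ (2 * m + 1)) ∧
  (∀ z, ‖iteratedFDeriv ℝ 2 φ z‖ ≤ C * nrm z ^ (2 * m)) ∧
  (∀ z, ‖iteratedFDeriv ℝ 3 φ z‖ ≤ C * nrm z ^ (2 * m - 1))

/-- `φ_x`. -/
def phx (φ : ℝ × ℝ → ℝ) (z : ℝ × ℝ) : ℝ := fderiv ℝ φ z (1, 0)

/-- `φ_y`. -/
def phy (φ : ℝ × ℝ → ℝ) (z : ℝ × ℝ) : ℝ := fderiv ℝ φ z (0, 1)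

/-- `XF(z) = φ_x(z) − |z|^(2m) y` for `F(z,t) = φ(z) − t`. -/
def ZFx (m : ℝ) (φ : ℝ × ℝ → ℝ) (z : ℝ × ℝ) : ℝ := phx φ z - w2m m z * z.2

/-- `YF(z) = φ_y(z) + |z|^(2m) x` for `F(z,t) = φ(z) − t`. -/
def ZFy (m : ℝ) (φ : ℝ × ℝ → ℝ) (z : ℝ × ℝ) : ℝ := phy φ z + w2m m z * z.1

/-- `|ZF(z)|`. -/
def ZFnorm (m : ℝ) (φ : ℝ × ℝ → ℝ) (z : ℝ × ℝ) : ℝ :=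
  Real.sqrt (ZFx m φ z ^ 2 + ZFy m φ z ^ 2)

/-- Second partial derivatives. -/
def phxx (φ : ℝ × ℝ → ℝ) (w : ℝ × ℝ) : ℝ :=
  fderiv ℝ (fun p => fderiv ℝ φ p ((1 : ℝ), (0 : ℝ))) w ((1 : ℝ), (0 : ℝ))
def phxy (φ : ℝ × ℝ → ℝ) (w : ℝ × ℝ) : ℝ :=
  fderiv ℝ (fun p => fderiv ℝ φ p ((1 : ℝ), (0 : ℝ))) w ((0 : ℝ), (1 : ℝ))
def phyx (φ : ℝ × ℝ → ℝ) (w : ℝ × ℝ) : ℝ :=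
  fderiv ℝ (fun p => fderiv ℝ φ p ((0 : ℝ), (1 : ℝ))) w ((1 : ℝ), (0 : ℝ))
def phyy (φ : ℝ × ℝ → ℝ) (w : ℝ × ℝ) : ℝ :=
  fderiv ℝ (fun p => fderiv ℝ φ p ((0 : ℝ), (1 : ℝ))) w ((0 : ℝ), (1 : ℝ))

/-- The matrix `M(z,ζ)` of the paper (with Taylor base points `z'`, `z''` on `[z,ζ]`)
applied to a vector `h ∈ ℝ²`; here `|z|^(2m−2) = (x²+y²)^(m−1)`. -/
def Mact (m : ℝ) (φ : ℝ × ℝ → ℝ) (z z' z'' h : ℝ × ℝ) : ℝ × ℝ :=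
  ((phxx φ z' - 2 * m * (z.1 ^ 2 + z.2 ^ 2) ^ (m - 1) * z.1 * z.2) * h.1 +
     (phxy φ z' -
       (z.1 ^ 2 + z.2 ^ 2) ^ (m - 1) * ((z.1 ^ 2 + z.2 ^ 2) + 2 * m * z.2 ^ 2)) * h.2,
   (phyx φ z'' +
       (z.1 ^ 2 + z.2 ^ 2) ^ (m - 1) * ((z.1 ^ 2 + z.2 ^ 2) + 2 * m * z.1 ^ 2)) * h.1 +
     (phyy φ z'' + 2 * m * (z.1 ^ 2 + z.2 ^ 2) ^ (m - 1) * z.1 * z.2) * h.2)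

lemma nrm_nonneg (z : ℝ × ℝ) : 0 ≤ nrm z := Real.sqrt_nonneg _

lemma nrm_sq (z : ℝ × ℝ) : nrm z ^ 2 = z.1 ^ 2 + z.2 ^ 2 :=
  Real.sq_sqrt (by positivity)

lemma abs_fst_le_nrm (z : ℝ × ℝ) : |z.1| ≤ nrm z := by
  rw [nrm, ← Real.sqrt_sq_eq_abs]
  exact Real.sqrt_le_sqrt (by nlinarith [sq_nonneg z.2])

lemma abs_snd_le_nrm (z : ℝ × ℝ) : |z.2| ≤ nrm z := by
  rw [nrm, ← Real.sqrt_sq_eq_abs]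
  exact Real.sqrt_le_sqrt (by nlinarith [sq_nonneg z.1])

lemma norm_le_nrm (z : ℝ × ℝ) : ‖z‖ ≤ nrm z := by
  rw [Prod.norm_def]
  exact max_le (by simpa [Real.norm_eq_abs] using abs_fst_le_nrm z)
    (by simpa [Real.norm_eq_abs] using abs_snd_le_nrm z)

lemma nrm_neg (z : ℝ × ℝ) : nrm (-z) = nrm z := by simp [nrm]

lemma nrm_smul (c : ℝ) (z : ℝ × ℝ) : nrm (c • z) = |c| * nrm z := by
  rw [nrm, nrm, ← Real.sqrt_sq_eq_abs, ← Real.sqrt_mul (sq_nonneg c)]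
  congr 1
  simp [Prod.smul_def, smul_eq_mul]
  ring

lemma nrm_dot_le (a b : ℝ × ℝ) : a.1 * b.1 + a.2 * b.2 ≤ nrm a * nrm b := by
  have h : nrm a * nrm b = Real.sqrt ((a.1 ^ 2 + a.2 ^ 2) * (b.1 ^ 2 + b.2 ^ 2)) :=
    (Real.sqrt_mul (by positivity) _).symm
  rw [h]
  rcases le_or_gt (a.1 * b.1 + a.2 * b.2) 0 with h0 | h0
  · exact h0.trans (Real.sqrt_nonneg _)
  · rw [show (a.1 * b.1 + a.2 * b.2) = Real.sqrt ((a.1 * b.1 + a.2 * b.2) ^ 2) from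
      (Real.sqrt_sq h0.le).symm]
    exact Real.sqrt_le_sqrt (by nlinarith [sq_nonneg (a.1 * b.2 - a.2 * b.1)])

lemma nrm_add_le (a b : ℝ × ℝ) : nrm (a + b) ≤ nrm a + nrm b := by
  have h := nrm_dot_le a b
  have ha := nrm_nonneg a
  have hb := nrm_nonneg b
  have h2 : nrm (a + b) ^ 2 ≤ (nrm a + nrm b) ^ 2 := by
    rw [nrm_sq]
    simp only [Prod.fst_add, Prod.snd_add]
    nlinarith [nrm_sq a, nrm_sq b]
  calc nrm (a + b) = Real.sqrt (nrm (a + b) ^ 2) := (Real.sqrt_sq (nrm_nonneg _)).symm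
    _ ≤ Real.sqrt ((nrm a + nrm b) ^ 2) := Real.sqrt_le_sqrt h2
    _ = nrm a + nrm b := Real.sqrt_sq (by positivity)

instance instNACG2 : NormedAddCommGroup ((ℝ × ℝ) →L[ℝ] ((ℝ × ℝ) →L[ℝ] ℝ)) :=
  ContinuousLinearMap.toNormedAddCommGroup
instance instNS2 : NormedSpace ℝ ((ℝ × ℝ) →L[ℝ] ((ℝ × ℝ) →L[ℝ] ℝ)) :=
  ContinuousLinearMap.toNormedSpace

section Helpers
variable {φ : ℝ × ℝ → ℝ}

lemma diff_f1 (hφ : ContDiff ℝ (⊤ : ℕ∞) φ) : Differentiable ℝ (fderiv ℝ φ) :=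
  (hφ.fderiv_right (m := (⊤ : ℕ∞)) ((by simp))).differentiable (by simp)

lemma diff_f2 (hφ : ContDiff ℝ (⊤ : ℕ∞) φ) : Differentiable ℝ (fderiv ℝ (fderiv ℝ φ)) :=
  ((hφ.fderiv_right (m := (⊤ : ℕ∞)) ((by simp))).fderiv_right (m := (⊤ : ℕ∞)) ((by simp))).differentiable (by simp)

lemma fderiv_dir_apply (hφ : ContDiff ℝ (⊤ : ℕ∞) φ) (a w b : ℝ × ℝ) :
    fderiv ℝ (fun p => fderiv ℝ φ p a) w b = fderiv ℝ (fderiv ℝ φ) w b a := by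
  have h := fderiv_clm_apply (𝕜 := ℝ) (c := fderiv ℝ φ) (u := fun _ => a)
    (diff_f1 hφ w) (differentiableAt_const a)
  simp only [fderiv_fun_const, Pi.zero_apply] at h
  rw [h]; simp

/-- Norm of the third iterated `fderiv` is controlled by `iteratedFDeriv 3`. -/
lemma norm_f3_le (hφ : ContDiff ℝ (⊤ : ℕ∞) φ) (w : ℝ × ℝ) :
    ‖fderiv ℝ (fderiv ℝ (fderiv ℝ φ)) w‖ ≤ ‖iteratedFDeriv ℝ 3 φ w‖ := by
  have h1 : ‖iteratedFDeriv ℝ 1 (fderiv ℝ (fderiv ℝ φ)) w‖ = ‖iteratedFDeriv ℝ 3 φ w‖ := by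
    rw [norm_iteratedFDeriv_fderiv, norm_iteratedFDeriv_fderiv]
  rw [← h1]
  apply ContinuousLinearMap.opNorm_le_bound _ (norm_nonneg _)
  intro u
  have : fderiv ℝ (fderiv ℝ (fderiv ℝ φ)) w u
      = iteratedFDeriv ℝ 1 (fderiv ℝ (fderiv ℝ φ)) w ![u] := by
    rw [iteratedFDeriv_one_apply]; simp
  rw [this]
  calc ‖iteratedFDeriv ℝ 1 (fderiv ℝ (fderiv ℝ φ)) w ![u]‖
      ≤ ‖iteratedFDeriv ℝ 1 (fderiv ℝ (fderiv ℝ φ)) w‖ * ∏ i, ‖(![u] : Fin 1 → ℝ × ℝ) i‖ :=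
        ContinuousMultilinearMap.le_opNorm _ _
    _ = ‖iteratedFDeriv ℝ 1 (fderiv ℝ (fderiv ℝ φ)) w‖ * ‖u‖ := by simp

/-- Mean value bound for directional second derivatives. -/
lemma d2_lip (hφ : ContDiff ℝ (⊤ : ℕ∞) φ) {s : Set (ℝ × ℝ)} (hs : Convex ℝ s) {K : ℝ}
    (hK : ∀ p ∈ s, ‖iteratedFDeriv ℝ 3 φ p‖ ≤ K) (a b : ℝ × ℝ)
    (ha : ‖a‖ ≤ 1) (hb : ‖b‖ ≤ 1) {p q : ℝ × ℝ} (hp : p ∈ s) (hq : q ∈ s) :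
    |fderiv ℝ (fun w => fderiv ℝ φ w a) p b - fderiv ℝ (fun w => fderiv ℝ φ w a) q b|
      ≤ K * ‖p - q‖ := by
  set f2 := fderiv ℝ (fderiv ℝ φ) with hf2
  set f3 := fderiv ℝ f2 with hf3
  set ψ : ℝ × ℝ → ℝ := fun w => f2 w b a with hψ
  have hrw : ∀ w, fderiv ℝ (fun w => fderiv ℝ φ w a) w b = ψ w := fun w =>
    fderiv_dir_apply hφ a w b
  have hder : ∀ w ∈ s, HasFDerivWithinAt ψ
      ((ContinuousLinearMap.apply ℝ ℝ a).comp
        ((ContinuousLinearMap.apply ℝ ((ℝ × ℝ) →L[ℝ] ℝ) b).comp (f3 w))) s w := by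
    intro w _
    have h2 : HasFDerivAt f2 (f3 w) w := (diff_f2 hφ w).hasFDerivAt
    exact (((ContinuousLinearMap.apply ℝ ℝ a).hasFDerivAt.comp w
      (((ContinuousLinearMap.apply ℝ ((ℝ × ℝ) →L[ℝ] ℝ) b).hasFDerivAt.comp w
        h2)))).hasFDerivWithinAt
  have hbound : ∀ w ∈ s, ‖(ContinuousLinearMap.apply ℝ ℝ a).comp
      ((ContinuousLinearMap.apply ℝ ((ℝ × ℝ) →L[ℝ] ℝ) b).comp (f3 w))‖ ≤ K := by
    intro w hw
    have hK0 : 0 ≤ K := (norm_nonneg _).trans (hK w hw)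
    apply ContinuousLinearMap.opNorm_le_bound _ hK0
    intro u
    have h1 : ‖f3 w u b a‖ ≤ ‖f3 w‖ * ‖u‖ * ‖b‖ * ‖a‖ := by
      calc ‖f3 w u b a‖ ≤ ‖f3 w u b‖ * ‖a‖ := (f3 w u b).le_opNorm a
        _ ≤ ‖f3 w u‖ * ‖b‖ * ‖a‖ := by
            gcongr; exact (f3 w u).le_opNorm b
        _ ≤ ‖f3 w‖ * ‖u‖ * ‖b‖ * ‖a‖ := by
            gcongr; exact (f3 w).le_opNorm u
    have h2 : ‖f3 w‖ ≤ K := (norm_f3_le hφ w).trans (hK w hw)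
    calc ‖((ContinuousLinearMap.apply ℝ ℝ a).comp
        ((ContinuousLinearMap.apply ℝ ((ℝ × ℝ) →L[ℝ] ℝ) b).comp (f3 w))) u‖
        = ‖f3 w u b a‖ := rfl
      _ ≤ ‖f3 w‖ * ‖u‖ * ‖b‖ * ‖a‖ := h1
      _ ≤ K * ‖u‖ * 1 * 1 := by gcongr
      _ = K * ‖u‖ := by ring
  have := Convex.norm_image_sub_le_of_norm_hasFDerivWithin_le hder hbound hs hq hp
  rw [hrw p, hrw q]
  simpa [Real.norm_eq_abs] using this

end Helpers

lemma symm_2nd {φ : ℝ × ℝ → ℝ} (hφ : ContDiff ℝ (⊤ : ℕ∞) φ) (w a b : ℝ × ℝ) :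
    fderiv ℝ (fderiv ℝ φ) w a b = fderiv ℝ (fderiv ℝ φ) w b a :=
  second_derivative_symmetric (fun y => ((hφ.differentiable (by simp)) y).hasFDerivAt)
    ((diff_f1 hφ w).hasFDerivAt) a b

lemma component_lower (v e h : ℝ × ℝ) (r N D δ1 δ2 : ℝ)
    (hr : 0 < r) (hN : 0 < N) (hNv : 2 * N ≤ nrm v)
    (hh : h = (r / 2) • ((nrm v)⁻¹ • v) + e)
    (he : nrm e ≤ r / 4) (hd1 : |δ1| ≤ D) (hd2 : |δ2| ≤ D)
    (hD : D * (3 * r / 4) * 2 ≤ 1 / 4 * N * r) :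
    1 / 4 * N * r ≤ (v.1 + δ1) * h.1 + (v.2 + δ2) * h.2 := by
  have hnv : 0 < nrm v := lt_of_lt_of_le (by positivity) hNv
  have h1 : h.1 = r / 2 * ((nrm v)⁻¹ * v.1) + e.1 := by
    rw [hh]; simp [smul_eq_mul]
  have h2 : h.2 = r / 2 * ((nrm v)⁻¹ * v.2) + e.2 := by
    rw [hh]; simp [smul_eq_mul]
  have hinv : (nrm v)⁻¹ * (v.1 ^ 2 + v.2 ^ 2) = nrm v := by
    rw [← nrm_sq, sq, ← mul_assoc, inv_mul_cancel₀ hnv.ne', one_mul]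
  have hdot : v.1 * h.1 + v.2 * h.2
      = r / 2 * ((nrm v)⁻¹ * (v.1 ^ 2 + v.2 ^ 2)) + (v.1 * e.1 + v.2 * e.2) := by
    rw [h1, h2]; ring
  rw [hinv] at hdot
  have hce : -(nrm v * nrm e) ≤ v.1 * e.1 + v.2 * e.2 := by
    have := nrm_dot_le v (-e)
    rw [nrm_neg] at this
    simp only [Prod.fst_neg, Prod.snd_neg, mul_neg] at this
    linarith
  have hnrmu : nrm ((r / 2) • ((nrm v)⁻¹ • v)) = r / 2 := by
    rw [nrm_smul, nrm_smul, abs_of_pos (by positivity), abs_of_pos (by positivity),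
      inv_mul_cancel₀ hnv.ne', mul_one]
  have hnrmh : nrm h ≤ 3 * r / 4 := by
    rw [hh]
    calc nrm _ ≤ nrm ((r / 2) • ((nrm v)⁻¹ • v)) + nrm e := nrm_add_le _ _
      _ ≤ r / 2 + r / 4 := by rw [hnrmu]; linarith
      _ = 3 * r / 4 := by ring
  have hD0 : 0 ≤ D := (abs_nonneg _).trans hd1
  have habs1 : |h.1| ≤ 3 * r / 4 := (abs_fst_le_nrm h).trans hnrmh
  have habs2 : |h.2| ≤ 3 * r / 4 := (abs_snd_le_nrm h).trans hnrmh
  have hδ1 : -(D * (3 * r / 4)) ≤ δ1 * h.1 := by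
    have : |δ1 * h.1| ≤ D * (3 * r / 4) := by
      rw [abs_mul]; exact mul_le_mul hd1 habs1 (abs_nonneg _) hD0
    linarith [neg_abs_le (δ1 * h.1)]
  have hδ2 : -(D * (3 * r / 4)) ≤ δ2 * h.2 := by
    have : |δ2 * h.2| ≤ D * (3 * r / 4) := by
      rw [abs_mul]; exact mul_le_mul hd2 habs2 (abs_nonneg _) hD0
    linarith [neg_abs_le (δ2 * h.2)]
  have hve : nrm v * nrm e ≤ nrm v * (r / 4) := by
    exact mul_le_mul_of_nonneg_left he hnv.le
  have hNv' : r / 4 * (2 * N) ≤ r / 4 * nrm v :=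
    mul_le_mul_of_nonneg_left hNv (by positivity)
  have hexp : (v.1 + δ1) * h.1 + (v.2 + δ2) * h.2
      = (v.1 * h.1 + v.2 * h.2) + δ1 * h.1 + δ2 * h.2 := by ring
  rw [hexp, hdot]
  linarith

lemma seg_pt_bounds {z ζ p : ℝ × ℝ} (hp : p ∈ segment ℝ z ζ) :
    nrm (p - z) ≤ nrm (ζ - z) ∧ nrm p ≤ nrm z + nrm (ζ - z) := by
  obtain ⟨s, t, hs, ht, hst, rfl⟩ := hp
  have hpz : s • z + t • ζ - z = t • (ζ - z) := by
    have : s = 1 - t := by linarith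
    rw [this]; module
  have h1 : nrm (s • z + t • ζ - z) = t * nrm (ζ - z) := by
    rw [hpz, nrm_smul, abs_of_nonneg ht]
  have ht1 : t ≤ 1 := by linarith
  constructor
  · rw [h1]
    exact mul_le_of_le_one_left (nrm_nonneg _) ht1
  · have : s • z + t • ζ = z + (s • z + t • ζ - z) := by abel
    rw [this]
    refine (nrm_add_le _ _).trans ?_
    rw [h1]
    have := mul_le_of_le_one_left (nrm_nonneg (ζ - z)) ht1
    linarith

lemma seg_d2_bound {m Ca : ℝ} (hm : 1 ≤ m) (hCa : 0 < Ca) {φ : ℝ × ℝ → ℝ}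
    (hφ : ContDiff ℝ (⊤ : ℕ∞) φ)
    (h3 : ∀ p, ‖iteratedFDeriv ℝ 3 φ p‖ ≤ Ca * nrm p ^ (2 * m - 1))
    {z ζ : ℝ × ℝ} (hzζ : nrm (ζ - z) ≤ nrm z) (a b : ℝ × ℝ)
    (ha : ‖a‖ ≤ 1) (hb : ‖b‖ ≤ 1) {p : ℝ × ℝ} (hp : p ∈ segment ℝ z ζ) :
    |fderiv ℝ (fun w => fderiv ℝ φ w a) p b - fderiv ℝ (fun w => fderiv ℝ φ w a) z b|
      ≤ Ca * (2 * nrm z) ^ (2 * m - 1) * nrm (ζ - z) := by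
  set K := Ca * (2 * nrm z) ^ (2 * m - 1) with hKdef
  have hK : ∀ q ∈ segment ℝ z ζ, ‖iteratedFDeriv ℝ 3 φ q‖ ≤ K := by
    intro q hq
    have hq2 : nrm q ≤ 2 * nrm z := by
      have := (seg_pt_bounds hq).2
      linarith
    refine (h3 q).trans ?_
    rw [hKdef]
    have : nrm q ^ (2 * m - 1) ≤ (2 * nrm z) ^ (2 * m - 1) :=
      Real.rpow_le_rpow (nrm_nonneg q) hq2 (by linarith)
    exact mul_le_mul_of_nonneg_left this hCa.le
  have hlip := d2_lip hφ (convex_segment z ζ) hK a b ha hb hp (left_mem_segment ℝ z ζ)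
  refine hlip.trans ?_
  have hK0 : 0 ≤ K := by
    rw [hKdef]
    exact mul_nonneg hCa.le (Real.rpow_nonneg (by nlinarith [nrm_nonneg z]) _)
  have h1 : ‖p - z‖ ≤ nrm (ζ - z) := (norm_le_nrm _).trans (seg_pt_bounds hp).1
  exact mul_le_mul_of_nonneg_left h1 hK0

lemma norm_b10 : ‖((1:ℝ), (0:ℝ))‖ ≤ 1 := by simp [Prod.norm_def]
lemma norm_b01 : ‖((0:ℝ), (1:ℝ))‖ ≤ 1 := by simp [Prod.norm_def]

set_option maxHeartbeats 3200000 in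
/-- Quantitative nondegeneracy of `M(z,ζ)`: for every `z ≠ 0` there is a unit vector `u`
such that `|M(z,ζ)(ζ − z)| ≥ C₂⁻¹ |z|^(2m) r` for all `ζ ∈ B_Eucl(z + (r/2)u, ε₂ r)`
with `0 < r < ε₀|z|`, the base points `z', z''` lying on the segment `[z,ζ]`. -/
theorem stmt17 (m Ca : ℝ) (hm : 1 ≤ m) (hCa : 0 < Ca) :
    ∃ C₂ : ℝ, 1 < C₂ ∧ ∃ ε₀ ∈ Ioo (0 : ℝ) 1, ∃ ε₂ ∈ Ioo (0 : ℝ) 1,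
      ∀ φ : ℝ × ℝ → ℝ, Admissible m Ca φ →
      ∀ z : ℝ × ℝ, z ≠ 0 → ∃ u : ℝ × ℝ, nrm u = 1 ∧
        ∀ r : ℝ, 0 < r → r < ε₀ * nrm z →
        ∀ ζ : ℝ × ℝ, nrm (ζ - (z + (r / 2) • u)) < ε₂ * r →
        ∀ z' z'' : ℝ × ℝ, z' ∈ segment ℝ z ζ → z'' ∈ segment ℝ z ζ →
          C₂⁻¹ * nrm z ^ (2 * m) * r ≤ nrm (Mact m φ z z' z'' (ζ - z)) := by
  set B := Ca * (2 : ℝ) ^ (2 * m) with hBdef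
  have hB : 0 < B := mul_pos hCa (Real.rpow_pos_of_pos two_pos _)
  set ε₀ := min (1 / 2 : ℝ) (1 / (8 * B)) with hε₀def
  have hε₀pos : 0 < ε₀ := lt_min (by norm_num) (by positivity)
  have hε₀half : ε₀ ≤ 1 / 2 := min_le_left _ _
  have hε₀B : ε₀ ≤ 1 / (8 * B) := min_le_right _ _
  refine ⟨4, by norm_num, ε₀, ⟨hε₀pos, lt_of_le_of_lt hε₀half (by norm_num)⟩,
    1 / 4, ⟨by norm_num, by norm_num⟩, ?_⟩
  intro φ hA z hz
  obtain ⟨hφ, -, -, h3⟩ := hA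
  have hz1 : z.1 ≠ 0 ∨ z.2 ≠ 0 := by
    by_contra hcon
    push_neg at hcon
    exact hz (Prod.ext hcon.1 hcon.2)
  have hS : 0 < z.1 ^ 2 + z.2 ^ 2 := by
    rcases hz1 with h | h
    · have := lt_of_le_of_ne (sq_nonneg z.1) (Ne.symm (pow_ne_zero 2 h))
      nlinarith [sq_nonneg z.2]
    · have := lt_of_le_of_ne (sq_nonneg z.2) (Ne.symm (pow_ne_zero 2 h))
      nlinarith [sq_nonneg z.1]
  have hn : 0 < nrm z := Real.sqrt_pos.mpr hS
  set n := nrm z with hndef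
  set N := (z.1 ^ 2 + z.2 ^ 2) ^ m with hNdef
  have hN : 0 < N := Real.rpow_pos_of_pos hS m
  have hNn : n ^ (2 * m) = N := by
    rw [hndef, hNdef, nrm, Real.sqrt_eq_rpow, ← Real.rpow_mul hS.le]
    congr 1
    ring
  set Q := (z.1 ^ 2 + z.2 ^ 2) ^ (m - 1) with hQdef
  have hQpos : 0 < Q := Real.rpow_pos_of_pos hS _
  have hQS : Q * (z.1 ^ 2 + z.2 ^ 2) = N := by
    rw [hQdef, hNdef, ← Real.rpow_add_one hS.ne' (m - 1)]
    congr 1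
    ring
  have hsym : phyx φ z = phxy φ z := by
    simp only [phyx, phxy]
    rw [fderiv_dir_apply hφ, fderiv_dir_apply hφ, symm_2nd hφ]
  -- the two candidate big off-diagonal entries
  have hP : (phxy φ z + Q * ((z.1 ^ 2 + z.2 ^ 2) + 2 * m * z.1 ^ 2))
      - (phxy φ z - Q * ((z.1 ^ 2 + z.2 ^ 2) + 2 * m * z.2 ^ 2)) = (2 * m + 2) * N := by
    linear_combination (2 * m + 2) * hQS
  by_cases hPc : 2 * N ≤ phxy φ z + Q * ((z.1 ^ 2 + z.2 ^ 2) + 2 * m * z.1 ^ 2)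
  · -- use the second row
    set v : ℝ × ℝ := (phxy φ z + Q * ((z.1 ^ 2 + z.2 ^ 2) + 2 * m * z.1 ^ 2),
      phyy φ z + 2 * m * Q * z.1 * z.2) with hvdef
    have hnv2N : 2 * N ≤ nrm v := le_trans (hPc.trans (le_abs_self _)) (abs_fst_le_nrm v)
    have hnv : 0 < nrm v := lt_of_lt_of_le (by positivity) hnv2N
    refine ⟨(nrm v)⁻¹ • v, ?_, ?_⟩
    · rw [nrm_smul, abs_of_pos (inv_pos.mpr hnv), inv_mul_cancel₀ hnv.ne']
    intro r hr hrb ζ hζ z' z'' hz' hz''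
    have hrn : r ≤ n / 2 := by
      have h1 : ε₀ * n ≤ 1 / 2 * n := mul_le_mul_of_nonneg_right hε₀half hn.le
      linarith
    have hζz34 : nrm (ζ - z) ≤ 3 * r / 4 := by
      have hsplit : ζ - z = (r / 2) • ((nrm v)⁻¹ • v)
          + (ζ - (z + (r / 2) • ((nrm v)⁻¹ • v))) := by module
      rw [hsplit]
      refine (nrm_add_le _ _).trans ?_
      rw [nrm_smul, nrm_smul, abs_of_pos (inv_pos.mpr hnv), inv_mul_cancel₀ hnv.ne',
        mul_one, abs_of_pos (by positivity : (0:ℝ) < r / 2)]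
      linarith
    have hzζn : nrm (ζ - z) ≤ n := le_trans hζz34 (by linarith)
    set K := Ca * (2 * n) ^ (2 * m - 1) with hKdef
    have hK0 : 0 ≤ K := mul_nonneg hCa.le (Real.rpow_nonneg (by linarith) _)
    set D := K * (3 * r / 4) with hDdef
    have hd1 : |phyx φ z'' - phyx φ z| ≤ D := by
      have h' : |phyx φ z'' - phyx φ z| ≤ K * nrm (ζ - z) := by
        simpa [phyx] using seg_d2_bound hm hCa hφ h3 hzζn ((0:ℝ), (1:ℝ)) ((1:ℝ), (0:ℝ))
          norm_b01 norm_b10 hz''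
      exact h'.trans (mul_le_mul_of_nonneg_left hζz34 hK0)
    have hd2 : |phyy φ z'' - phyy φ z| ≤ D := by
      have h' : |phyy φ z'' - phyy φ z| ≤ K * nrm (ζ - z) := by
        simpa [phyy] using seg_d2_bound hm hCa hφ h3 hzζn ((0:ℝ), (1:ℝ)) ((0:ℝ), (1:ℝ))
          norm_b01 norm_b01 hz''
      exact h'.trans (mul_le_mul_of_nonneg_left hζz34 hK0)
    have hKr : K * r ≤ N / 8 := by
      have hmul : ((2 * n) : ℝ) ^ (2 * m - 1) = (2:ℝ) ^ (2 * m - 1) * n ^ (2 * m - 1) :=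
        Real.mul_rpow (by norm_num) hn.le
      have h2le : (2:ℝ) ^ (2 * m - 1) ≤ (2:ℝ) ^ (2 * m) :=
        Real.rpow_le_rpow_of_exponent_le one_le_two (by linarith)
      have hnp : (0:ℝ) ≤ n ^ (2 * m - 1) := Real.rpow_nonneg hn.le _
      have hKB : K ≤ B * n ^ (2 * m - 1) := by
        rw [hKdef, hmul, hBdef]
        calc Ca * ((2:ℝ) ^ (2 * m - 1) * n ^ (2 * m - 1))
            ≤ Ca * ((2:ℝ) ^ (2 * m) * n ^ (2 * m - 1)) := by
              apply mul_le_mul_of_nonneg_left _ hCa.le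
              exact mul_le_mul_of_nonneg_right h2le hnp
          _ = Ca * (2:ℝ) ^ (2 * m) * n ^ (2 * m - 1) := by ring
      have hrB : r ≤ 1 / (8 * B) * n := by
        have := mul_le_mul_of_nonneg_right hε₀B hn.le
        linarith
      have hmid : n ^ (2 * m - 1) * n = N := by
        rw [← Real.rpow_add_one hn.ne' (2 * m - 1), show 2 * m - 1 + 1 = 2 * m by ring, hNn]
      calc K * r ≤ (B * n ^ (2 * m - 1)) * (1 / (8 * B) * n) :=
            mul_le_mul hKB hrB hr.le (by positivity)
        _ = (n ^ (2 * m - 1) * n) / 8 := by field_simp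
        _ = N / 8 := by rw [hmid]
    have hD4 : D * (3 * r / 4) * 2 ≤ 1 / 4 * N * r := by
      rw [hDdef]
      nlinarith [mul_le_mul_of_nonneg_right hKr hr.le, hr, hN]
    have he4 : nrm (ζ - (z + (r / 2) • ((nrm v)⁻¹ • v))) ≤ r / 4 := by linarith
    have hlow := component_lower v (ζ - (z + (r / 2) • ((nrm v)⁻¹ • v))) (ζ - z) r N D
      (phyx φ z'' - phyx φ z) (phyy φ z'' - phyy φ z) hr hN hnv2N (by module) he4 hd1 hd2 hD4
    have hcomp : (v.1 + (phyx φ z'' - phyx φ z)) * (ζ - z).1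
        + (v.2 + (phyy φ z'' - phyy φ z)) * (ζ - z).2
        = (Mact m φ z z' z'' (ζ - z)).2 := by
      simp only [Mact, hvdef]
      rw [← hQdef, hsym]
      ring
    calc (4:ℝ)⁻¹ * n ^ (2 * m) * r = 1 / 4 * N * r := by rw [hNn]; norm_num
      _ ≤ _ := hlow
      _ = (Mact m φ z z' z'' (ζ - z)).2 := hcomp
      _ ≤ |(Mact m φ z z' z'' (ζ - z)).2| := le_abs_self _
      _ ≤ nrm (Mact m φ z z' z'' (ζ - z)) := abs_snd_le_nrm _
  · -- use the first row
    push_neg at hPc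
    set v : ℝ × ℝ := (phxx φ z - 2 * m * Q * z.1 * z.2,
      phxy φ z - Q * ((z.1 ^ 2 + z.2 ^ 2) + 2 * m * z.2 ^ 2)) with hvdef
    have hmN : 1 * N ≤ m * N := mul_le_mul_of_nonneg_right hm hN.le
    have hv2 : v.2 = phxy φ z - Q * ((z.1 ^ 2 + z.2 ^ 2) + 2 * m * z.2 ^ 2) := rfl
    have hP1 : v.2 ≤ -(2 * N) := by rw [hv2]; linarith [hP, hPc, hmN]
    have hnv2N : 2 * N ≤ nrm v := by
      refine le_trans ?_ (abs_snd_le_nrm v)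
      have : 2 * N ≤ -v.2 := by linarith
      exact this.trans (neg_le_abs _)
    have hnv : 0 < nrm v := lt_of_lt_of_le (by positivity) hnv2N
    refine ⟨(nrm v)⁻¹ • v, ?_, ?_⟩
    · rw [nrm_smul, abs_of_pos (inv_pos.mpr hnv), inv_mul_cancel₀ hnv.ne']
    intro r hr hrb ζ hζ z' z'' hz' hz''
    have hrn : r ≤ n / 2 := by
      have h1 : ε₀ * n ≤ 1 / 2 * n := mul_le_mul_of_nonneg_right hε₀half hn.le
      linarith
    have hζz34 : nrm (ζ - z) ≤ 3 * r / 4 := by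
      have hsplit : ζ - z = (r / 2) • ((nrm v)⁻¹ • v)
          + (ζ - (z + (r / 2) • ((nrm v)⁻¹ • v))) := by module
      rw [hsplit]
      refine (nrm_add_le _ _).trans ?_
      rw [nrm_smul, nrm_smul, abs_of_pos (inv_pos.mpr hnv), inv_mul_cancel₀ hnv.ne',
        mul_one, abs_of_pos (by positivity : (0:ℝ) < r / 2)]
      linarith
    have hzζn : nrm (ζ - z) ≤ n := le_trans hζz34 (by linarith)
    set K := Ca * (2 * n) ^ (2 * m - 1) with hKdef
    have hK0 : 0 ≤ K := mul_nonneg hCa.le (Real.rpow_nonneg (by linarith) _)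
    set D := K * (3 * r / 4) with hDdef
    have hd1 : |phxx φ z' - phxx φ z| ≤ D := by
      have h' : |phxx φ z' - phxx φ z| ≤ K * nrm (ζ - z) := by
        simpa [phxx] using seg_d2_bound hm hCa hφ h3 hzζn ((1:ℝ), (0:ℝ)) ((1:ℝ), (0:ℝ))
          norm_b10 norm_b10 hz'
      exact h'.trans (mul_le_mul_of_nonneg_left hζz34 hK0)
    have hd2 : |phxy φ z' - phxy φ z| ≤ D := by
      have h' : |phxy φ z' - phxy φ z| ≤ K * nrm (ζ - z) := by
        simpa [phxy] using seg_d2_bound hm hCa hφ h3 hzζn ((1:ℝ), (0:ℝ)) ((0:ℝ), (1:ℝ))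
          norm_b10 norm_b01 hz'
      exact h'.trans (mul_le_mul_of_nonneg_left hζz34 hK0)
    have hKr : K * r ≤ N / 8 := by
      have hmul : ((2 * n) : ℝ) ^ (2 * m - 1) = (2:ℝ) ^ (2 * m - 1) * n ^ (2 * m - 1) :=
        Real.mul_rpow (by norm_num) hn.le
      have h2le : (2:ℝ) ^ (2 * m - 1) ≤ (2:ℝ) ^ (2 * m) :=
        Real.rpow_le_rpow_of_exponent_le one_le_two (by linarith)
      have hnp : (0:ℝ) ≤ n ^ (2 * m - 1) := Real.rpow_nonneg hn.le _
      have hKB : K ≤ B * n ^ (2 * m - 1) := by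
        rw [hKdef, hmul, hBdef]
        calc Ca * ((2:ℝ) ^ (2 * m - 1) * n ^ (2 * m - 1))
            ≤ Ca * ((2:ℝ) ^ (2 * m) * n ^ (2 * m - 1)) := by
              apply mul_le_mul_of_nonneg_left _ hCa.le
              exact mul_le_mul_of_nonneg_right h2le hnp
          _ = Ca * (2:ℝ) ^ (2 * m) * n ^ (2 * m - 1) := by ring
      have hrB : r ≤ 1 / (8 * B) * n := by
        have := mul_le_mul_of_nonneg_right hε₀B hn.le
        linarith
      have hmid : n ^ (2 * m - 1) * n = N := by
        rw [← Real.rpow_add_one hn.ne' (2 * m - 1), show 2 * m - 1 + 1 = 2 * m by ring, hNn]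
      calc K * r ≤ (B * n ^ (2 * m - 1)) * (1 / (8 * B) * n) :=
            mul_le_mul hKB hrB hr.le (by positivity)
        _ = (n ^ (2 * m - 1) * n) / 8 := by field_simp
        _ = N / 8 := by rw [hmid]
    have hD4 : D * (3 * r / 4) * 2 ≤ 1 / 4 * N * r := by
      rw [hDdef]
      nlinarith [mul_le_mul_of_nonneg_right hKr hr.le, hr, hN]
    have he4 : nrm (ζ - (z + (r / 2) • ((nrm v)⁻¹ • v))) ≤ r / 4 := by linarith
    have hlow := component_lower v (ζ - (z + (r / 2) • ((nrm v)⁻¹ • v))) (ζ - z) r N D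
      (phxx φ z' - phxx φ z) (phxy φ z' - phxy φ z) hr hN hnv2N (by module) he4 hd1 hd2 hD4
    have hcomp : (v.1 + (phxx φ z' - phxx φ z)) * (ζ - z).1
        + (v.2 + (phxy φ z' - phxy φ z)) * (ζ - z).2
        = (Mact m φ z z' z'' (ζ - z)).1 := by
      simp only [Mact, hvdef]
      rw [← hQdef]
      ring
    calc (4:ℝ)⁻¹ * n ^ (2 * m) * r = 1 / 4 * N * r := by rw [hNn]; norm_num
      _ ≤ _ := hlow
      _ = (Mact m φ z z' z'' (ζ - z)).1 := hcomp
      _ ≤ |(Mact m φ z z' z'' (ζ - z)).1| := le_abs_self _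
      _ ≤ nrm (Mact m φ z z' z'' (ζ - z)) := abs_fst_le_nrm _
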